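/- Let s ≥ 2 and k ≥ 1 be integers, and let B be a nonempty set of k-blocks, B ⊆ (Fin k → Fin s), with cardinality j = card B. Then the set E = { x ∈ ℝ : ∃ a : ℕ → Fin s, (∀ m, (fun i => a (k·m + i)) ∈ B) ∧ x = ∑_{n=0}^∞ (a n : ℝ) / s^{n+1} } of all numbers in [0,1] admitting an s-adic expansion all of whose consecutive k-digit blocks lie in B has Hausdorff dimension dimH E = (log j) / (k · log s). (The self-similar fractal dimension result used in the paper's Lemma 8.) -/

import Mathlib

/-!
Code the points of the set by sequences `ω : ℕ → B` of admissible blocks. Codes that agree on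
their first `n` blocks give points at distance at most `s^(-kn)`, so the `j^n` cylinders of
length `n` cover the set by pieces of diameter `s^(-kn)`; since `j^n (s^(-kn))^d = 1` for
`d = log j / (k log s)`, the `d`-dimensional Hausdorff measure is at most `1`. Conversely, the
first `kn` digits of a point, read as an integer, determine its first `n` blocks and vary by at
most `2` over a set of diameter `s^(-kn)`. Such a set therefore carries mass at most `5 j^(-n)`
for the image of the uniform Bernoulli measure on `B^ℕ`, and the mass distribution principle
gives the lower bound.
-/

open scoped ENNReal NNReal
open MeasureTheory Set Filter Topology PiNat Metric

theorem ENNReal.rpow_pow_comm (x : ℝ≥0∞) (y : ℝ) (n : ℕ) : (x ^ y) ^ n = (x ^ n) ^ y := by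
  rw [← ENNReal.rpow_natCast, ← ENNReal.rpow_mul, mul_comm, ENNReal.rpow_mul, ENNReal.rpow_natCast]

section MassDistribution

variable {X : Type*} [EMetricSpace X] [MeasurableSpace X] [BorelSpace X]

theorem le_dimH_of_measure_le_mul_ediam_rpow {μ : Measure X} {s : Set X} {d : ℝ≥0}
    {C ε : ℝ≥0∞} (hs : μ s ≠ 0) (hε : 0 < ε) (hC : C ≠ ∞)
    (h : ∀ U, ediam U ≤ ε → μ U ≤ C * ediam U ^ (d : ℝ)) : (d : ℝ≥0∞) ≤ dimH s := by
  have hle : C⁻¹ • μ ≤ μH[d] := by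
    refine Measure.le_hausdorffMeasure _ _ ε hε fun U hU => ?_
    rw [Measure.smul_apply, smul_eq_mul, ← ENNReal.div_eq_inv_mul]
    exact ENNReal.div_le_of_le_mul (by rw [mul_comm]; exact h U hU)
  refine le_dimH_of_hausdorffMeasure_ne_zero fun h0 => ?_
  have := Measure.le_iff'.1 hle s
  rw [h0, Measure.smul_apply, smul_eq_mul, nonpos_iff_eq_zero] at this
  exact mul_ne_zero (ENNReal.inv_ne_zero.2 hC) hs this

theorem le_dimH_of_measure_le_pow {μ : Measure X} {s : Set X} {d : ℝ≥0} {C : ℝ≥0∞}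
    {r : ℝ≥0} (hs : μ s ≠ 0) (hr0 : 0 < r) (hr1 : r < 1) (hC : C ≠ ∞)
    (h : ∀ (n : ℕ) U, ediam U ≤ (r : ℝ≥0∞) ^ n → μ U ≤ C * ((r : ℝ≥0∞) ^ n) ^ (d : ℝ)) :
    (d : ℝ≥0∞) ≤ dimH s := by
  rcases eq_zero_or_pos d with rfl | hd
  · simp
  have hrd0 : (r : ℝ≥0∞) ^ (d : ℝ) ≠ 0 := by simp [hr0.ne']
  have hrd1 : (r : ℝ≥0∞) ^ (d : ℝ) < 1 :=
    ENNReal.rpow_lt_one (by exact_mod_cast hr1) (by exact_mod_cast hd)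
  refine le_dimH_of_measure_le_mul_ediam_rpow hs one_pos (C := C * ((r : ℝ≥0∞) ^ (d : ℝ))⁻¹)
    (ENNReal.mul_ne_top hC (ENNReal.inv_ne_top.2 hrd0)) fun U hU => ?_
  rcases eq_or_ne (ediam U) 0 with h0 | h0
  · have hlim : Tendsto (fun n : ℕ => C * ((r : ℝ≥0∞) ^ n) ^ (d : ℝ)) atTop (𝓝 0) := by
      simpa [← ENNReal.rpow_pow_comm] using
        ENNReal.Tendsto.const_mul (ENNReal.tendsto_pow_atTop_nhds_zero_of_lt_one hrd1) (.inr hC)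
    have : μ U = 0 := nonpos_iff_eq_zero.1 <| ge_of_tendsto' hlim fun n => h n U (by simp [h0])
    simp [this]
  have hUtop : ediam U ≠ ∞ := ne_top_of_le_ne_top ENNReal.one_ne_top hU
  have hU' : ediam U = (ediam U).toNNReal := (ENNReal.coe_toNNReal hUtop).symm
  obtain ⟨n, hlt, hle⟩ := exists_nat_pow_near_of_lt_one (ENNReal.toNNReal_pos h0 hUtop)
    (by simpa using ENNReal.toNNReal_mono ENNReal.one_ne_top hU) hr0 hr1
  calc μ U ≤ C * ((r : ℝ≥0∞) ^ n) ^ (d : ℝ) := h n U (by rw [hU']; exact_mod_cast hle)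
    _ = C * ((r : ℝ≥0∞) ^ (d : ℝ))⁻¹ * ((r : ℝ≥0∞) ^ (n + 1)) ^ (d : ℝ) := by
      rw [pow_succ, ENNReal.mul_rpow_of_nonneg _ _ d.coe_nonneg, mul_assoc, mul_left_comm _ (_ ^ _),
        ENNReal.inv_mul_cancel hrd0 (by simp), mul_one]
    _ ≤ C * ((r : ℝ≥0∞) ^ (d : ℝ))⁻¹ * ediam U ^ (d : ℝ) := by
      gcongr
      rw [hU']
      exact_mod_cast hlt.le

end MassDistribution

section Coding

variable {β : Type*} [Fintype β] [Nonempty β]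

theorem dimH_range_le_of_edist_le_pow {X : Type*} [EMetricSpace X] {π : (ℕ → β) → X}
    {r : ℝ≥0} (hr1 : r < 1) {d : ℝ≥0} (hd : (r : ℝ≥0∞) ^ (d : ℝ) = (Fintype.card β : ℝ≥0∞)⁻¹)
    (h : ∀ n x y, y ∈ cylinder x n → edist (π x) (π y) ≤ (r : ℝ≥0∞) ^ n) :
    dimH (range π) ≤ d := by
  borelize X
  let t : ∀ n : ℕ, (Fin n → β) → Set X := fun n w => π '' {x | ∀ i : Fin n, x i = w i}
  have ht : ∀ n w, ediam (t n w) ≤ (r : ℝ≥0∞) ^ n := by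
    refine fun n w => ediam_le_iff.2 ?_
    rintro _ ⟨x, hx, rfl⟩ _ ⟨y, hy, rfl⟩
    exact h n x y fun i hi => (hy ⟨i, hi⟩).trans (hx ⟨i, hi⟩).symm
  have hcover : ∀ n, range π ⊆ ⋃ w, t n w := by
    rintro n _ ⟨x, rfl⟩
    exact mem_iUnion.2 ⟨fun i => x i, x, fun i => rfl, rfl⟩
  have hsum : ∀ n, ∑ w, ediam (t n w) ^ (d : ℝ) ≤ 1 := by
    intro n
    have hcard : (Fintype.card β : ℝ≥0∞) ≠ 0 := by simp
    calc ∑ w, ediam (t n w) ^ (d : ℝ) ≤ ∑ _w : Fin n → β, (((r : ℝ≥0∞) ^ n) ^ (d : ℝ)) :=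
          Finset.sum_le_sum fun w _ => ENNReal.rpow_le_rpow (ht n w) d.coe_nonneg
      _ = 1 := by
        rw [Finset.sum_const, Finset.card_univ, Fintype.card_fun, Fintype.card_fin, nsmul_eq_mul,
          ← ENNReal.rpow_pow_comm, hd, Nat.cast_pow, ← mul_pow,
          ENNReal.mul_inv_cancel hcard (by simp), one_pow]
  have hr : Tendsto (fun n : ℕ => (r : ℝ≥0∞) ^ n) atTop (𝓝 0) :=
    ENNReal.tendsto_pow_atTop_nhds_zero_of_lt_one (by exact_mod_cast hr1)
  refine dimH_le_of_hausdorffMeasure_ne_top (ne_top_of_le_ne_top ENNReal.one_ne_top ?_)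
  calc μH[d] (range π) ≤ liminf (fun n => ∑ w, ediam (t n w) ^ (d : ℝ)) atTop :=
        Measure.hausdorffMeasure_le_liminf_sum _ _ _ hr t (.of_forall ht) (.of_forall hcover)
    _ ≤ 1 := liminf_le_of_frequently_le' (.of_forall hsum)

variable [MeasurableSpace β] [MeasurableSingletonClass β]

variable (β) in
noncomputable def uniformBernoulli : Measure (ℕ → β) :=
  Measure.infinitePi fun _ => ProbabilityTheory.uniformOn univ

instance : IsProbabilityMeasure (uniformBernoulli β) := by
  unfold uniformBernoulli; infer_instance

theorem uniformBernoulli_cylinder (x : ℕ → β) (n : ℕ) :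
    uniformBernoulli β (cylinder x n) = (Fintype.card β : ℝ≥0∞)⁻¹ ^ n := by
  rw [uniformBernoulli, cylinder_eq_pi,
    Measure.infinitePi_pi _ fun i _ => measurableSet_singleton _]
  simp [ProbabilityTheory.uniformOn_univ]

theorem uniformBernoulli_le_of_address {A : (ℕ → β) → ℕ} {n : ℕ}
    (hA : ∀ x y, A x = A y → y ∈ cylinder x n) {c : ℕ} {T : Set (ℕ → β)}
    (hT : ∀ x ∈ T, ∀ y ∈ T, A x ≤ A y + c) :
    uniformBernoulli β T ≤ ((2 * c + 1 : ℕ) : ℝ≥0∞) * (Fintype.card β : ℝ≥0∞)⁻¹ ^ n := by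
  rcases T.eq_empty_or_nonempty with rfl | ⟨x₀, hx₀⟩
  · simp
  have hfibre : ∀ q, uniformBernoulli β (T ∩ A ⁻¹' {q}) ≤ (Fintype.card β : ℝ≥0∞)⁻¹ ^ n := by
    intro q
    rcases (T ∩ A ⁻¹' {q}).eq_empty_or_nonempty with h | ⟨y, -, hy⟩
    · simp [h]
    rw [← uniformBernoulli_cylinder y]
    exact measure_mono fun z ⟨_, hz⟩ => hA y z (hy.trans hz.symm)
  have hcover : T ⊆ ⋃ q ∈ Finset.Icc (A x₀ - c) (A x₀ + c), T ∩ A ⁻¹' {q} := fun x hx => by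
    have := hT x hx x₀ hx₀
    have := hT x₀ hx₀ x hx
    exact mem_iUnion₂.2 ⟨A x, Finset.mem_Icc.2 ⟨by omega, by omega⟩, hx, rfl⟩
  calc uniformBernoulli β T
      ≤ ∑ q ∈ Finset.Icc (A x₀ - c) (A x₀ + c), uniformBernoulli β (T ∩ A ⁻¹' {q}) :=
        (measure_mono hcover).trans (measure_biUnion_finset_le _ _)
    _ ≤ ∑ q ∈ Finset.Icc (A x₀ - c) (A x₀ + c), (Fintype.card β : ℝ≥0∞)⁻¹ ^ n :=
        Finset.sum_le_sum fun q _ => hfibre q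
    _ ≤ ((2 * c + 1 : ℕ) : ℝ≥0∞) * (Fintype.card β : ℝ≥0∞)⁻¹ ^ n := by
        rw [Finset.sum_const, nsmul_eq_mul, Nat.card_Icc]
        gcongr
        exact_mod_cast (by omega : A x₀ + c + 1 - (A x₀ - c) ≤ 2 * c + 1)

theorem le_dimH_range_of_address {X : Type*} [EMetricSpace X] [MeasurableSpace X] [BorelSpace X]
    {π : (ℕ → β) → X} (hπ : Measurable π) {r : ℝ≥0} (hr0 : 0 < r) (hr1 : r < 1) {d : ℝ≥0}
    (hd : (r : ℝ≥0∞) ^ (d : ℝ) = (Fintype.card β : ℝ≥0∞)⁻¹) (A : ℕ → (ℕ → β) → ℕ)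
    (hA : ∀ n x y, A n x = A n y → y ∈ cylinder x n) (c : ℕ)
    (hπA : ∀ n x y, edist (π x) (π y) ≤ (r : ℝ≥0∞) ^ n → A n x ≤ A n y + c) :
    (d : ℝ≥0∞) ≤ dimH (range π) := by
  set ν := (uniformBernoulli β).map π
  have hrange : ν (range π) ≠ 0 := by
    refine (lt_of_lt_of_le ?_ (Measure.le_map_apply hπ.aemeasurable _)).ne'
    simp
  refine le_dimH_of_measure_le_pow hrange hr0 hr1 (ENNReal.natCast_ne_top (2 * c + 1))
    fun n U hU => ?_
  calc ν U ≤ ν (closure U) := measure_mono subset_closure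
    _ = uniformBernoulli β (π ⁻¹' closure U) := Measure.map_apply hπ isClosed_closure.measurableSet
    _ ≤ ((2 * c + 1 : ℕ) : ℝ≥0∞) * (Fintype.card β : ℝ≥0∞)⁻¹ ^ n := by
      refine uniformBernoulli_le_of_address (hA n) fun x hx y hy => hπA n x y ?_
      exact (edist_le_ediam_of_mem (s := closure U) hx hy).trans (ediam_closure U ▸ hU)
    _ = ((2 * c + 1 : ℕ) : ℝ≥0∞) * ((r : ℝ≥0∞) ^ n) ^ (d : ℝ) := by rw [← ENNReal.rpow_pow_comm, hd]

end Coding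

section Digits

open Real

variable {b : ℕ}

def ofDigitsPrefix (a : ℕ → Fin b) : ℕ → ℕ
  | 0 => 0
  | n + 1 => b * ofDigitsPrefix a n + a n

theorem sum_ofDigitsTerm_eq_ofDigitsPrefix (a : ℕ → Fin b) (n : ℕ) :
    ∑ i ∈ Finset.range n, ofDigitsTerm a i = ofDigitsPrefix a n / (b : ℝ) ^ n := by
  have hb : (b : ℝ) ≠ 0 := by exact_mod_cast (Fin.pos (a 0)).ne'
  induction n with
  | zero => simp [ofDigitsPrefix]
  | succ n ih =>
    rw [Finset.sum_range_succ, ih, ofDigitsTerm, ofDigitsPrefix]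
    push_cast
    field_simp
    ring

theorem mem_cylinder_of_ofDigitsPrefix_eq {a a' : ℕ → Fin b} {n : ℕ}
    (h : ofDigitsPrefix a n = ofDigitsPrefix a' n) : a' ∈ cylinder a n := by
  induction n with
  | zero => simp
  | succ n ih =>
    simp only [ofDigitsPrefix] at h
    have hb : 0 < b := Fin.pos (a 0)
    have hlast : (a n : ℕ) = a' n := by
      simpa [Nat.mul_add_mod, Nat.mod_eq_of_lt] using congrArg (· % b) h
    have hprefix : ofDigitsPrefix a n = ofDigitsPrefix a' n := by
      simpa [Nat.mul_add_div hb, Nat.div_eq_of_lt] using congrArg (· / b) h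
    intro i hi
    rcases Nat.lt_succ_iff_lt_or_eq.1 hi with hi | rfl
    · exact ih hprefix i hi
    · exact (Fin.ext hlast).symm

theorem ofDigits_mem_Icc_ofDigitsPrefix (a : ℕ → Fin b) (n : ℕ) :
    ofDigits a ∈ Icc (ofDigitsPrefix a n / (b : ℝ) ^ n)
      (ofDigitsPrefix a n / (b : ℝ) ^ n + ((b : ℝ) ^ n)⁻¹) := by
  rw [ofDigits_eq_sum_add_ofDigits a n, sum_ofDigitsTerm_eq_ofDigitsPrefix]
  have h0 := ofDigits_nonneg fun i => a (i + n)
  have h1 := ofDigits_le_one fun i => a (i + n)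
  have hb : 0 ≤ ((b : ℝ) ^ n)⁻¹ := by positivity
  constructor <;> nlinarith

theorem ofDigitsPrefix_le_add_two {a a' : ℕ → Fin b} {n : ℕ}
    (h : |ofDigits a - ofDigits a'| ≤ ((b : ℝ) ^ n)⁻¹) :
    ofDigitsPrefix a n ≤ ofDigitsPrefix a' n + 2 := by
  have hbn : (0 : ℝ) < (b : ℝ) ^ n := pow_pos (by exact_mod_cast Fin.pos (a 0)) n
  have ha := ofDigits_mem_Icc_ofDigitsPrefix a n
  have ha' := ofDigits_mem_Icc_ofDigitsPrefix a' n
  have : (ofDigitsPrefix a n : ℝ) / (b : ℝ) ^ n ≤ (ofDigitsPrefix a' n + 2 : ℝ) / (b : ℝ) ^ n := by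
    rw [add_div, div_eq_mul_inv 2]
    linarith [ha.1, ha'.2, (abs_le.1 h).2]
  exact_mod_cast (div_le_div_iff_of_pos_right hbn).1 this

end Digits

section Blocks

variable {s k : ℕ} [NeZero k]

def blockDigits (w : ℕ → Fin k → Fin s) : ℕ → Fin s := fun n => w (n / k) (Fin.ofNat k n)

theorem blockDigits_mul_add (w : ℕ → Fin k → Fin s) (m : ℕ) (i : Fin k) :
    blockDigits w (k * m + i) = w m i := by
  have hk : 0 < k := NeZero.pos k
  simp only [blockDigits, Nat.mul_add_div hk, Nat.div_eq_of_lt i.2, add_zero]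
  congr 1
  ext
  simp [Nat.mod_eq_of_lt i.2]

theorem blockDigits_mem_cylinder_iff {w w' : ℕ → Fin k → Fin s} {n : ℕ} :
    blockDigits w' ∈ cylinder (blockDigits w) (k * n) ↔ w' ∈ cylinder w n := by
  have hk : 0 < k := NeZero.pos k
  constructor
  · intro h m hm
    funext i
    rw [← blockDigits_mul_add w, ← blockDigits_mul_add w']
    exact h _ (by nlinarith [i.2])
  · intro h m hm
    simp only [blockDigits]
    rw [h (m / k) ((Nat.div_lt_iff_lt_mul hk).2 (by linarith))]

theorem blockDigits_blocks (a : ℕ → Fin s) :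
    blockDigits (fun m (i : Fin k) => a (k * m + i)) = a := by
  funext n
  simp [blockDigits, Nat.div_add_mod]

variable {β : Type*}

noncomputable def ofBlocks (e : β → Fin k → Fin s) (ω : ℕ → β) : ℝ :=
  Real.ofDigits (blockDigits (e ∘ ω))

theorem measurable_ofBlocks [MeasurableSpace β] [DiscreteMeasurableSpace β]
    (e : β → Fin k → Fin s) : Measurable (ofBlocks e) :=
  Real.continuous_ofDigits.measurable.comp <| measurable_pi_lambda _ fun n =>
    (Measurable.of_discrete (f := fun x : β => e x (Fin.ofNat k n))).comp
      (measurable_pi_apply (n / k))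

theorem abs_ofBlocks_sub_le (e : β → Fin k → Fin s) {x y : ℕ → β} {n : ℕ}
    (h : y ∈ cylinder x n) : |ofBlocks e x - ofBlocks e y| ≤ ((s : ℝ) ^ (k * n))⁻¹ := by
  refine Real.abs_ofDigits_sub_ofDigits_le fun i hi => ?_
  exact (blockDigits_mem_cylinder_iff.2 (fun m hm => congrArg e (h m hm)) i hi).symm

theorem mem_cylinder_of_ofDigitsPrefix_blockDigits_eq {e : β → Fin k → Fin s}
    (he : Function.Injective e) {x y : ℕ → β} {n : ℕ}
    (h : ofDigitsPrefix (blockDigits (e ∘ x)) (k * n) =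
      ofDigitsPrefix (blockDigits (e ∘ y)) (k * n)) : y ∈ cylinder x n := fun i hi =>
  he (blockDigits_mem_cylinder_iff.1 (mem_cylinder_of_ofDigitsPrefix_eq h) i hi)

theorem range_ofBlocks_subtypeVal (B : Finset (Fin k → Fin s)) :
    range (ofBlocks (Subtype.val : B → Fin k → Fin s)) =
      {x : ℝ | ∃ a : ℕ → Fin s, (∀ m : ℕ, (fun i : Fin k => a (k * m + i)) ∈ B) ∧
        x = ∑' n : ℕ, ((a n : ℕ) : ℝ) / (s : ℝ) ^ (n + 1)} := by
  ext x
  constructor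
  · rintro ⟨ω, rfl⟩
    refine ⟨blockDigits (Subtype.val ∘ ω), fun m => ?_, ?_⟩
    · simp [blockDigits_mul_add]
    · simp [ofBlocks, Real.ofDigits, Real.ofDigitsTerm, div_eq_mul_inv]
  · rintro ⟨a, ha, rfl⟩
    refine ⟨fun m => ⟨_, ha m⟩, ?_⟩
    simp [ofBlocks, Function.comp_def, blockDigits_blocks, Real.ofDigits, Real.ofDigitsTerm,
      div_eq_mul_inv]

end Blocks

theorem dimH_range_ofBlocks {s k : ℕ} [NeZero k] {β : Type*} [Fintype β] [Nonempty β]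
    (hs : 1 < s) {e : β → Fin k → Fin s} (he : Function.Injective e) :
    dimH (range (ofBlocks e)) =
      ENNReal.ofReal (Real.log (Fintype.card β) / (k * Real.log s)) := by
  let _ : MeasurableSpace β := ⊤
  have : DiscreteMeasurableSpace β := ⟨fun _ => trivial⟩
  have hsk : (1 : ℝ) < (s : ℝ) ^ k := one_lt_pow₀ (by exact_mod_cast hs) (NeZero.ne k)
  set r : ℝ≥0 := ((s : ℝ≥0) ^ k)⁻¹ with hr
  have hr0 : 0 < r := by positivity
  have hr1 : r < 1 := inv_lt_one_of_one_lt₀ (by exact_mod_cast hsk)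
  set d : ℝ≥0 := (Real.log (Fintype.card β) / (k * Real.log s)).toNNReal with hd
  have hd' : (d : ℝ) = Real.logb ((s : ℝ) ^ k) (Fintype.card β) := by
    rw [hd, Real.coe_toNNReal', Real.logb, Real.log_pow, max_eq_left]
    exact div_nonneg (Real.log_natCast_nonneg _) (by positivity)
  have hpow : ((s : ℝ≥0) ^ k) ^ (d : ℝ) = Fintype.card β := by
    rw [← NNReal.coe_inj]
    push_cast
    rw [hd', Real.rpow_logb (by positivity) hsk.ne' (by exact_mod_cast Fintype.card_pos)]
  have hrd : (r : ℝ≥0∞) ^ (d : ℝ) = (Fintype.card β : ℝ≥0∞)⁻¹ := by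
    rw [← ENNReal.coe_rpow_of_nonneg _ d.coe_nonneg, hr, NNReal.inv_rpow, hpow,
      ENNReal.coe_inv (by simp), ENNReal.coe_natCast]
  have hedist : ∀ (x y : ℕ → β) (n : ℕ), edist (ofBlocks e x) (ofBlocks e y) ≤ (r : ℝ≥0∞) ^ n ↔
      |ofBlocks e x - ofBlocks e y| ≤ ((s : ℝ) ^ (k * n))⁻¹ := by
    intro x y n
    rw [← ENNReal.coe_pow, edist_le_coe, ← NNReal.coe_le_coe, coe_nndist, Real.dist_eq]
    simp [hr, pow_mul]
  exact le_antisymm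
    (dimH_range_le_of_edist_le_pow hr1 hrd fun n x y h =>
      (hedist x y n).2 (abs_ofBlocks_sub_le e h))
    (le_dimH_range_of_address (measurable_ofBlocks e) hr0 hr1 hrd
      (fun n x => ofDigitsPrefix (blockDigits (e ∘ x)) (k * n))
      (fun n x y h => mem_cylinder_of_ofDigitsPrefix_blockDigits_eq he h) 2
      fun n x y h => ofDigitsPrefix_le_add_two ((hedist x y n).1 h))

theorem stmt_7 (s k : ℕ) (hs : 2 ≤ s) (hk : 1 ≤ k)
    (B : Finset (Fin k → Fin s)) (hB : B.Nonempty) (j : ℕ) (hj : j = B.card) :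
    dimH {x : ℝ | ∃ a : ℕ → Fin s,
        (∀ m : ℕ, (fun i : Fin k => a (k * m + i)) ∈ B) ∧
        x = ∑' n : ℕ, ((a n : ℕ) : ℝ) / (s : ℝ) ^ (n + 1)} =
      ENNReal.ofReal (Real.log j / (k * Real.log s)) := by
  have : NeZero k := ⟨by omega⟩
  have : Nonempty B := hB.to_subtype
  rw [← range_ofBlocks_subtypeVal, dimH_range_ofBlocks hs Subtype.val_injective, Fintype.card_coe,
    hj]
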